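/- Let c ∈ ℝ and k ∈ ℤ with 0 < π|k| < |c|. Then the 2×2 complex matrix i·[[2c² − 4π²k², −2c²],[2c², 4π²k² − 2c²]] has exactly two eigenvalues, namely ±4π|k|·√(c² − π²k²), which are real and nonzero. -/
import Mathlib


open Real in
/-- For `c ∈ ℝ`, `k ∈ ℤ` with `0 < π|k| < |c|`, the matrix
`i·[[2c²−4π²k², −2c²],[2c², 4π²k²−2c²]]` has exactly the two eigenvalues
`±4π|k|√(c²−π²k²)`, which are real and nonzero. -/
theorem stmt0 (c : ℝ) (k : ℤ) (h0 : 0 < π * |(k : ℝ)|) (h1 : π * |(k : ℝ)| < |c|)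
    (M : Matrix (Fin 2) (Fin 2) ℂ)
    (hM : M = Complex.I • !![((2 * c ^ 2 - 4 * π ^ 2 * (k : ℝ) ^ 2 : ℝ) : ℂ),
        ((-(2 * c ^ 2) : ℝ) : ℂ);
        ((2 * c ^ 2 : ℝ) : ℂ), ((4 * π ^ 2 * (k : ℝ) ^ 2 - 2 * c ^ 2 : ℝ) : ℂ)])
    (lam : ℝ) (hlam : lam = 4 * π * |(k : ℝ)| * Real.sqrt (c ^ 2 - π ^ 2 * (k : ℝ) ^ 2)) :
    (∀ μ : ℂ, Module.End.HasEigenvalue (Matrix.toLin' M) μ ↔ (μ = (lam : ℂ) ∨ μ = -(lam : ℂ)))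
      ∧ lam ≠ 0 := by
  have hX : 0 < c ^ 2 - π ^ 2 * (k : ℝ) ^ 2 := by
    nlinarith [mul_self_lt_mul_self h0.le h1, sq_abs (k:ℝ), sq_abs c]
  have hk : 0 < |(k:ℝ)| := by nlinarith [Real.pi_pos]
  have hsq : Real.sqrt (c ^ 2 - π ^ 2 * (k : ℝ) ^ 2) > 0 := Real.sqrt_pos.mpr hX
  have hlampos : 0 < lam := by rw [hlam]; positivity
  refine ⟨fun μ => ?_, hlampos.ne'⟩
  have hlamsq : lam ^ 2 = 16 * π ^ 2 * (k:ℝ) ^ 2 * (c ^ 2 - π ^ 2 * (k:ℝ) ^ 2) := by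
    rw [hlam, mul_pow, mul_pow, mul_pow, Real.sq_sqrt hX.le, sq_abs]; ring
  have key : Module.End.HasEigenvalue (Matrix.toLin' M) μ ↔ (M - μ • 1).det = 0 := by
    rw [Module.End.hasEigenvalue_iff, Submodule.ne_bot_iff, ← Matrix.exists_mulVec_eq_zero_iff]
    simp only [Module.End.mem_eigenspace_iff, Matrix.toLin'_apply, Matrix.sub_mulVec,
      Matrix.smul_mulVec, Matrix.one_mulVec, sub_eq_zero]
    tauto
  rw [key, hM]
  have hdet : (Complex.I • !![((2 * c ^ 2 - 4 * π ^ 2 * (k : ℝ) ^ 2 : ℝ) : ℂ),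
        ((-(2 * c ^ 2) : ℝ) : ℂ);
        ((2 * c ^ 2 : ℝ) : ℂ), ((4 * π ^ 2 * (k : ℝ) ^ 2 - 2 * c ^ 2 : ℝ) : ℂ)] - μ • 1).det
      = (μ - (lam:ℂ)) * (μ + (lam:ℂ)) := by
    have hl : ((lam:ℂ))^2 = 16 * (π:ℂ) ^ 2 * ((k:ℝ):ℂ) ^ 2 * ((c:ℂ) ^ 2 - (π:ℂ) ^ 2 * ((k:ℝ):ℂ) ^ 2) := by
      have := congrArg (Complex.ofReal) hlamsq
      push_cast at this ⊢
      linear_combination this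
    simp [Matrix.det_fin_two, Matrix.sub_apply, Matrix.smul_apply, Matrix.one_apply]
    push_cast at hl
    linear_combination ((2*(c:ℂ)^2-4*(π:ℂ)^2*((k:ℤ):ℂ)^2) * (4*(π:ℂ)^2*((k:ℤ):ℂ)^2-2*(c:ℂ)^2)
      + 4*(c:ℂ)^4) * Complex.I_sq + hl
  rw [hdet, mul_eq_zero, sub_eq_zero, add_eq_zero_iff_eq_neg]
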